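/- Lemma 3.1 (convergence of carriers to the vacuum carriers): fix n ≥ 3, l ≥ 1 and one of the three admissible κ. (i) There exists N₀ such that for every N ≥ N₀, every sequence b_1, …, b_N ∈ B with b_j = vac for all j with N − N₀ ≤ j ≤ N, and every x ∈ B_l, the right-moving carrier through b_1, b_2, …, b_N starting from x (at each site b_j = s_j ⊗ t_j, update the carrier c by (·, c') = ōR(c, s_j) followed by (·, c_new) = ōR∨(c', t_j)) ends at u_l. (ii) There exists N₀ such that for every N ≥ N₀, every sequence c_N, …, c_1 ∈ B with c_j = vac for all j with N − N₀ ≤ j ≤ N, and every y ∈ B∨_l, the left-moving carrier through c_1, c_2, …, c_N starting from y (at each site c_j = s_j ⊗ t_j, update the carrier w by (w', ·) = ōR∨∨(t_j, w) followed by (w_new, ·) = ōR∨(s_j, w')) ends at u∨_l = κ(u_l). -/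

import Mathlib

/- Common setup: crystals `B_l`, `B∨_l` for `U_q(sl_n^)`, combinatorial `R`, `R∨`, `R∨∨`
and the combinatorial `K` maps, following Kuniba–Okado–Yamada,
"Box-Ball System with Reflecting End".  Elements of `B_l` (and of `B∨_l`) are encoded as
integer-valued vectors indexed by `ZMod n` (coordinates read modulo `n`), membership in
`B_l` being expressed by the predicate `memB l`.  The affinization `Aff(B_l)` is encoded
as `ℤ × (ZMod n → ℤ)`, the pair `(d, x)` standing for `z^d x`. -/

namespace BBS

abbrev V (n : ℕ) := ZMod n → ℤ

variable {n : ℕ}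

/-- The candidate (for `k+1`, `0 ≤ k ≤ n-1`) in the minimum defining `Q_i(x,y)`:
`Σ_{j=1}^{k} x_{i+j} + Σ_{j=k+2}^{n} y_{i+j}`. -/
def Qt (x y : V n) (i : ZMod n) (k : ℕ) : ℤ :=
  (∑ j ∈ Finset.range k, x (i + (j : ZMod n) + 1)) +
    ∑ j ∈ Finset.Ico (k + 1) n, y (i + (j : ZMod n) + 1)

/-- `Qe x y i = Q_i(x,y) = min_{1 ≤ k ≤ n} ( Σ_{j=1}^{k−1} x_{i+j} + Σ_{j=k+1}^{n} y_{i+j} )`. -/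
def Qe (x y : V n) (i : ZMod n) : ℤ :=
  Finset.fold min (Qt x y i 0) (Qt x y i) (Finset.Ico 1 n)

/-- `Pe x y i = P_i(x,y) = min(x_{i+1}, y_{i+1})`. -/
def Pe (x y : V n) (i : ZMod n) : ℤ := min (x (i + 1)) (y (i + 1))

/-- Classical combinatorial `R : B_l ⊗ B_m → B_m ⊗ B_l`, `(x,y) ↦ (ỹ,x̃)`. -/
def Rbar (x y : V n) : V n × V n :=
  (fun i => y i + Qe x y (i - 1) - Qe x y i, fun i => x i + Qe x y i - Qe x y (i - 1))

/-- Classical combinatorial `R∨ : B_l ⊗ B∨_m → B∨_m ⊗ B_l`, `(x,y) ↦ (ỹ,x̃)`. -/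
def Rvbar (x y : V n) : V n × V n :=
  (fun i => y i + Pe x y i - Pe x y (i - 1), fun i => x i + Pe x y i - Pe x y (i - 1))

/-- Classical combinatorial `R∨∨ : B∨_l ⊗ B∨_m → B∨_m ⊗ B∨_l`, `(x,y) ↦ (ỹ,x̃)`. -/
def Rvvbar (x y : V n) : V n × V n :=
  (fun i => y i + Qe y x i - Qe y x (i - 1), fun i => x i + Qe y x (i - 1) - Qe y x i)

/-- The affinization: `(d, x)` stands for `z^d x`. -/
abbrev Aff (n : ℕ) := ℤ × V n

/-- Affine combinatorial `R`: `z^d x ⊗ z^e y ↦ z^{e−Q₀(x,y)} ỹ ⊗ z^{d+Q₀(x,y)} x̃`. -/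
def Raff (p : Aff n × Aff n) : Aff n × Aff n :=
  ((p.2.1 - Qe p.1.2 p.2.2 0, (Rbar p.1.2 p.2.2).1),
    (p.1.1 + Qe p.1.2 p.2.2 0, (Rbar p.1.2 p.2.2).2))

/-- Affine combinatorial `R∨`: `z^d x ⊗ z^e y ↦ z^{e−P₀(x,y)} ỹ ⊗ z^{d+P₀(x,y)} x̃`. -/
def Rvee (p : Aff n × Aff n) : Aff n × Aff n :=
  ((p.2.1 - Pe p.1.2 p.2.2 0, (Rvbar p.1.2 p.2.2).1),
    (p.1.1 + Pe p.1.2 p.2.2 0, (Rvbar p.1.2 p.2.2).2))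

/-- Affine combinatorial `R∨∨`: `z^d x ⊗ z^e y ↦ z^{e−Q₀(y,x)} ỹ ⊗ z^{d+Q₀(y,x)} x̃`. -/
def Rvv (p : Aff n × Aff n) : Aff n × Aff n :=
  ((p.2.1 - Qe p.2.2 p.1.2 0, (Rvvbar p.1.2 p.2.2).1),
    (p.1.1 + Qe p.2.2 p.1.2 0, (Rvvbar p.1.2 p.2.2).2))

/-- `κ =` Rotateleft: `κ(x) = (x_2, …, x_n, x_1)`. -/
def rotL (x : V n) : V n := fun i => x (i + 1)

/-- `I` for Rotateleft: `I(x) = −x_1`. -/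
def Irot (x : V n) : ℤ := -x 1

/-- `κ =` Switch₁ₙ (`n` even): exchanges the coordinate pairs
`(x_1,x_n), (x_2,x_3), (x_4,x_5), …, (x_{n−2},x_{n−1})`. -/
def sw1n (x : V n) : V n := fun i => if i.val % 2 = 1 then x (i - 1) else x (i + 1)

/-- `I` for Switch₁ₙ: `I(x) = x_n − x_1`. -/
def I1n (x : V n) : ℤ := x 0 - x 1

/-- `κ =` Switch₁₂ (`n` even): exchanges the coordinate pairs
`(x_1,x_2), (x_3,x_4), …, (x_{n−1},x_n)`. -/
def sw12 (x : V n) : V n := fun i => if i.val % 2 = 1 then x (i + 1) else x (i - 1)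

/-- `I` for Switch₁₂: `I(x) = 0`. -/
def I12 (_ : V n) : ℤ := 0

/-- Combinatorial `K : Aff(B_l) → Aff(B∨_l)`, `z^d x ↦ z^{−d+I(x)} κ(x)`. -/
def Kmap (κ : V n → V n) (I : V n → ℤ) (q : Aff n) : Aff n := (-q.1 + I q.2, κ q.2)

/-- Combinatorial `K∨ : Aff(B∨_l) → Aff(B_l)`, `z^d x ↦ z^{−d−I(x)} κ(x)`. -/
def Kvmap (κ : V n → V n) (I : V n → ℤ) (q : Aff n) : Aff n := (-q.1 - I q.2, κ q.2)

/-- `K₂`: apply `K` to the second tensor factor. -/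
def K2 (κ : V n → V n) (I : V n → ℤ) (p : Aff n × Aff n) : Aff n × Aff n :=
  (p.1, Kmap κ I p.2)

/-- `K∨₁`: apply `K∨` to the first tensor factor. -/
def Kv1 (κ : V n → V n) (I : V n → ℤ) (p : Aff n × Aff n) : Aff n × Aff n :=
  (Kvmap κ I p.1, p.2)

/-- `x ∈ B_l` (equivalently `x ∈ B∨_l`): all coordinates nonnegative, summing to `l`. -/
def memB (l : ℕ) (x : V n) : Prop :=
  (∀ i, 0 ≤ x i) ∧ (∑ j ∈ Finset.range n, x (j : ZMod n)) = (l : ℤ)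

end BBS

namespace BBS

/-- The letter `s ∈ {1, …, n}` of `B_1` (resp. `s̄` of `B∨_1`) as a unit vector. -/
def eLet (s : ℕ) : V n := fun a => if a = (s : ZMod n) then 1 else 0

/-- The highest element `u_l = (l, 0, …, 0) ∈ B_l`. -/
def uVec (l : ℕ) : V n := fun i => if i = 1 then (l : ℤ) else 0

/-- The vacuum local state `vac = 1 ⊗ κ(1) ∈ B = B_1 ⊗ B∨_1`. -/
def vacOf (κ : V n → V n) : V n × V n := (eLet 1, κ (eLet 1))

/-- Right-moving carrier update at a site `b = s ⊗ t`:
`(·, c') = ōR(c, s)` followed by `(·, c_new) = ōR∨(c', t)`. -/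
def stepR (c : V n) (b : V n × V n) : V n := (Rvbar (Rbar c b.1).2 b.2).2

/-- `runR b x N`: the right-moving carrier after passing through `b_1, b_2, …, b_N`,
starting from `x`. -/
def runR (b : ℕ → V n × V n) (x : V n) : ℕ → V n
  | 0 => x
  | N + 1 => stepR (runR b x N) (b (N + 1))

/-- Left-moving carrier update at a site `b = s ⊗ t`:
`(w', ·) = ōR∨∨(t, w)` followed by `(w_new, ·) = ōR∨(s, w')`. -/
def stepL (w : V n) (b : V n × V n) : V n := (Rvbar b.1 (Rvvbar b.2 w).1).1

/-- `runL b y N`: the left-moving carrier after passing through `b_1, b_2, …, b_N`,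
starting from `y`. -/
def runL (b : ℕ → V n × V n) (y : V n) : ℕ → V n
  | 0 => y
  | N + 1 => stepL (runL b y N) (b (N + 1))

/-! Every combinatorial `R` preserves the weight `l` of the carrier, since it changes the
coordinates by a telescoping difference `F i - F (i - 1)` and keeps them nonnegative.
At a vacuum site `1 ⊗ t̄` (`t ≠ 1`) the right-moving carrier `x` meets the letter `1`, and
`ōR` raises `x_1` by `min(1, l - x_1)`; the subsequent `ōR∨` with `t̄` cannot lower `x_1`,
because `t̄` has no entry there. Symmetrically the left-moving carrier gains at
coordinate `t`. After `l` vacuum sites the carrier is therefore concentrated at one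
coordinate: it is `u_l`, resp. `κ(u_l)`. -/

open Finset

variable {n : ℕ}

section Sums

variable [NeZero n]

lemma sum_range_natCast_eq_sum_univ {M : Type*} [AddCommMonoid M] (f : ZMod n → M) :
    ∑ j ∈ range n, f j = ∑ a, f a :=
  sum_nbij' (fun j => (j : ZMod n)) ZMod.val (fun _ _ => mem_univ _)
    (fun a _ => mem_range.2 (ZMod.val_lt a)) (fun _ hj => ZMod.val_cast_of_lt (mem_range.1 hj))
    (fun a _ => ZMod.natCast_zmod_val a) (fun _ _ => rfl)

lemma memB_iff {l : ℕ} {x : V n} : memB l x ↔ (∀ i, 0 ≤ x i) ∧ ∑ i, x i = l := by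
  rw [memB, sum_range_natCast_eq_sum_univ]

lemma natCast_pred_eq_neg_one : ((n - 1 : ℕ) : ZMod n) = -1 := by
  rw [Nat.cast_pred (Nat.pos_of_neZero n), ZMod.natCast_self, zero_sub]

lemma sum_range_pred_add (f : ZMod n → ℤ) (c : ZMod n) :
    ∑ j ∈ range (n - 1), f (c + j) = ∑ a, f a - f (c - 1) := by
  have hfull : ∑ j ∈ range (n - 1 + 1), f (c + j) = ∑ a, f a := by
    rw [Nat.sub_add_cancel (Nat.pos_of_neZero n),
      sum_range_natCast_eq_sum_univ (fun j => f (c + j))]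
    exact Fintype.sum_equiv (Equiv.addLeft c) _ _ fun _ => rfl
  rw [sum_range_succ, natCast_pred_eq_neg_one, ← sub_eq_add_neg] at hfull
  rw [← hfull, add_sub_cancel_right]

lemma memB_add_sub {l : ℕ} {x : V n} (hx : memB l x) (F : ZMod n → ℤ)
    (h : ∀ i, 0 ≤ x i + F i - F (i - 1)) : memB l (fun i => x i + F i - F (i - 1)) := by
  rw [memB_iff] at hx ⊢
  refine ⟨h, ?_⟩
  have hF : ∑ i, F (i - 1) = ∑ i, F i := Fintype.sum_equiv (Equiv.subRight 1) _ _ fun _ => rfl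
  simp only [sum_sub_distrib, sum_add_distrib, hF, hx.2, add_sub_cancel_right]

end Sums

section Q

variable {x y : V n} {i : ZMod n}

lemma Qe_le_Qt {k : ℕ} (hk : k < n) : Qe x y i ≤ Qt x y i k := by
  rcases Nat.eq_zero_or_pos k with rfl | hk0
  · exact (fold_min_le _).2 (Or.inl le_rfl)
  · exact (fold_min_le _).2 (Or.inr ⟨k, mem_Ico.2 ⟨hk0, hk⟩, le_rfl⟩)

lemma le_Qe [NeZero n] {c : ℤ} (h : ∀ k < n, c ≤ Qt x y i k) : c ≤ Qe x y i :=
  (le_fold_min _).2 ⟨h 0 (Nat.pos_of_neZero n), fun k hk => h k (mem_Ico.1 hk).2⟩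

lemma Qt_last [NeZero n] {l : ℕ} (hx : memB l x) : Qt x y i (n - 1) = l - x i := by
  have hempty : Ico (n - 1 + 1) n = ∅ :=
    Ico_eq_empty_iff.2 (by have := Nat.pos_of_neZero n; omega)
  have hshift : ∀ j ∈ range (n - 1), x (i + j + 1) = x (i + 1 + j) := fun j _ => by
    rw [add_right_comm]
  rw [Qt, hempty, sum_empty, add_zero, sum_congr rfl hshift, sum_range_pred_add,
    (memB_iff.1 hx).2, add_sub_cancel_right]

lemma Qt_pred_succ {k : ℕ} (hk : k + 2 ≤ n) :
    Qt x y (i - 1) (k + 1) + y i = Qt x y i k + x i := by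
  have : NeZero n := ⟨by omega⟩
  have hx :
      ∑ j ∈ range (k + 1), x (i - 1 + j + 1) = ∑ j ∈ range k, x (i + j + 1) + x i := by
    rw [sum_range_succ']
    congr 1
    · exact sum_congr rfl fun j _ => by push_cast; ring_nf
    · simp
  have hy : ∑ j ∈ Ico (k + 1) n, y (i + j + 1)
      = ∑ j ∈ Ico (k + 1 + 1) n, y (i - 1 + j + 1) + y i := by
    rw [sum_Ico_eq_sum_range, sum_Ico_eq_sum_range,
      show n - (k + 1) = n - (k + 1 + 1) + 1 by omega, sum_range_succ]
    congr 1
    · exact sum_congr rfl fun j _ => by push_cast; ring_nf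
    · rw [show k + 1 + (n - (k + 1 + 1)) = n - 1 by omega, natCast_pred_eq_neg_one]
      ring_nf
  rw [Qt, Qt, hx, hy]
  ring

lemma Qe_pred_le [NeZero n] {l : ℕ} (hx : memB l x) (hy : ∀ a, 0 ≤ y a) :
    Qe x y (i - 1) ≤ x i + Qe x y i := by
  suffices h : Qe x y (i - 1) - x i ≤ Qe x y i by linarith
  refine le_Qe fun k hk => ?_
  rcases Nat.lt_or_ge (k + 1) n with hk1 | hk1
  · have := Qe_le_Qt (x := x) (y := y) (i := i - 1) hk1
    have := Qt_pred_succ (x := x) (y := y) (i := i) (k := k) (by omega)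
    linarith [hy i]
  · obtain rfl : k = n - 1 := by omega
    have := Qe_le_Qt (x := x) (y := y) (i := i - 1) hk
    rw [Qt_last hx] at this ⊢
    linarith [hx.1 (i - 1)]

end Q

lemma Rvvbar_fst_eq_Rbar_snd (x y : V n) : (Rvvbar x y).1 = (Rbar y x).2 := rfl

section Weight

variable [NeZero n] {l m : ℕ} {x y : V n}

lemma memB_Rbar_snd (hx : memB l x) (hy : ∀ a, 0 ≤ y a) : memB l (Rbar x y).2 :=
  memB_add_sub hx (Qe x y) fun i => by linarith [Qe_pred_le (i := i) hx hy]

lemma memB_Rvbar_snd (hx : memB l x) (hy : ∀ a, 0 ≤ y a) : memB l (Rvbar x y).2 :=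
  memB_add_sub hx (Pe x y) fun i => by
    have hP : Pe x y (i - 1) ≤ x i := by rw [Pe, sub_add_cancel]; exact min_le_left _ _
    have : 0 ≤ Pe x y i := le_min (hx.1 (i + 1)) (hy (i + 1))
    linarith

lemma memB_Rvbar_fst (hx : ∀ a, 0 ≤ x a) (hy : memB m y) : memB m (Rvbar x y).1 :=
  memB_add_sub hy (Pe x y) fun i => by
    have hP : Pe x y (i - 1) ≤ y i := by rw [Pe, sub_add_cancel]; exact min_le_right _ _
    have : 0 ≤ Pe x y i := le_min (hx (i + 1)) (hy.1 (i + 1))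
    linarith

variable {b : ℕ → V n × V n}

lemma memB_stepR {c : V n} {s : V n × V n} (hc : memB l c) (hs : memB 1 s.1 ∧ memB 1 s.2) :
    memB l (stepR c s) :=
  memB_Rvbar_snd (memB_Rbar_snd hc hs.1.1) hs.2.1

lemma memB_stepL {w : V n} {s : V n × V n} (hw : memB l w) (hs : memB 1 s.1 ∧ memB 1 s.2) :
    memB l (stepL w s) :=
  memB_Rvbar_fst hs.1.1 (by rw [Rvvbar_fst_eq_Rbar_snd]; exact memB_Rbar_snd hw hs.2.1)

lemma memB_runR {x : V n} (hx : memB l x) {N : ℕ}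
    (hb : ∀ j, 1 ≤ j → j ≤ N → memB 1 (b j).1 ∧ memB 1 (b j).2) :
    ∀ M ≤ N, memB l (runR b x M)
  | 0, _ => hx
  | M + 1, hM => memB_stepR (memB_runR hx hb M (by omega)) (hb (M + 1) (by omega) hM)

lemma memB_runL {y : V n} (hy : memB l y) {N : ℕ}
    (hb : ∀ j, 1 ≤ j → j ≤ N → memB 1 (b j).1 ∧ memB 1 (b j).2) :
    ∀ M ≤ N, memB l (runL b y M)
  | 0, _ => hy
  | M + 1, hM => memB_stepL (memB_runL hy hb M (by omega)) (hb (M + 1) (by omega) hM)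

end Weight

section Nonneg

lemma single_one_nonneg (s a : ZMod n) : 0 ≤ (Pi.single s 1 : V n) a := by
  rw [Pi.single_apply]; split_ifs <;> norm_num

variable {x y : V n} {i : ZMod n}

lemma Rvbar_snd_apply_ge (hx : ∀ a, 0 ≤ x a) (hy : ∀ a, 0 ≤ y a) (hyi : y i = 0) :
    x i ≤ (Rvbar x y).2 i := by
  have hpred : Pe x y (i - 1) ≤ 0 := by rw [Pe, sub_add_cancel, ← hyi]; exact min_le_right _ _
  have hself : 0 ≤ Pe x y i := le_min (hx _) (hy _)
  simp only [Rvbar]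
  linarith

lemma Rvbar_fst_apply_ge (hx : ∀ a, 0 ≤ x a) (hy : ∀ a, 0 ≤ y a) (hxi : x i = 0) :
    y i ≤ (Rvbar x y).1 i := by
  have hpred : Pe x y (i - 1) ≤ 0 := by rw [Pe, sub_add_cancel, ← hxi]; exact min_le_left _ _
  have hself : 0 ≤ Pe x y i := le_min (hx _) (hy _)
  simp only [Rvbar]
  linarith

end Nonneg

section Vacuum

variable [NeZero n] {l : ℕ}

lemma Qe_single_pred_nonpos (x : V n) (s : ZMod n) : Qe x (Pi.single s 1) (s - 1) ≤ 0 := by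
  refine (Qe_le_Qt (Nat.pos_of_neZero n)).trans_eq ?_
  rw [Qt, sum_range_zero, zero_add]
  refine sum_eq_zero fun j hj => Pi.single_eq_of_ne (fun h => ?_) _
  obtain ⟨hj1, hjn⟩ := mem_Ico.1 hj
  have hj0 : (j : ZMod n) = 0 := by linear_combination h
  exact Nat.not_dvd_of_pos_of_lt hj1 hjn ((ZMod.natCast_eq_zero_iff j n).1 hj0)

lemma le_Qe_single_self {x : V n} (hx : memB l x) (s : ZMod n) :
    min 1 ((l : ℤ) - x s) ≤ Qe x (Pi.single s 1) s := by
  refine le_Qe fun k hk => ?_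
  rcases Nat.lt_or_ge (k + 1) n with hk1 | hk1
  · -- the summand `j = n - 1` of the second sum of `Qt` is the entry `s + (n - 1) + 1 = s`
    have hlast : (Pi.single s 1 : V n) (s + ((n - 1 : ℕ) : ZMod n) + 1) = 1 := by
      rw [natCast_pred_eq_neg_one, neg_add_cancel_right, Pi.single_eq_same]
    have hsum : (1 : ℤ) ≤ ∑ j ∈ Ico (k + 1) n, (Pi.single s 1 : V n) (s + j + 1) := by
      have hmem : n - 1 ∈ Ico (k + 1) n := mem_Ico.2 ⟨by omega, by omega⟩
      exact hlast.symm.le.trans <| single_le_sum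
        (f := fun j : ℕ => (Pi.single s 1 : V n) (s + j + 1))
        (fun _ _ => single_one_nonneg _ _) hmem
    have hfirst : 0 ≤ ∑ j ∈ range k, x (s + j + 1) := sum_nonneg fun _ _ => hx.1 _
    exact (min_le_left _ _).trans (by rw [Qt]; linarith)
  · obtain rfl : k = n - 1 := by omega
    exact (min_le_right _ _).trans_eq (Qt_last hx).symm

lemma Rbar_snd_single_self_ge {x : V n} (hx : memB l x) (s : ZMod n) :
    min (x s + 1) l ≤ (Rbar x (Pi.single s 1)).2 s := by
  have h1 := le_Qe_single_self hx s
  have h0 := Qe_single_pred_nonpos x s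
  simp only [Rbar]
  omega

variable {t : ZMod n} (ht : t ≠ 1)
include ht

lemma stepR_vacuum_ge {c : V n} (hc : memB l c) :
    min (c 1 + 1) l ≤ stepR c (Pi.single 1 1, Pi.single t 1) 1 :=
  (Rbar_snd_single_self_ge hc 1).trans <| Rvbar_snd_apply_ge
    (memB_Rbar_snd hc (single_one_nonneg 1)).1 (single_one_nonneg t) (Pi.single_eq_of_ne ht.symm _)

lemma stepL_vacuum_ge {w : V n} (hw : memB l w) :
    min (w t + 1) l ≤ stepL w (Pi.single 1 1, Pi.single t 1) t :=
  (Rbar_snd_single_self_ge hw t).trans <| Rvbar_fst_apply_ge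
    (single_one_nonneg 1) (memB_Rbar_snd hw (single_one_nonneg t)).1 (Pi.single_eq_of_ne ht _)

end Vacuum

section Convergence

variable [NeZero n] {l : ℕ}

lemma memB_eq_single {x : V n} (hx : memB l x) {i : ZMod n} (hi : (l : ℤ) ≤ x i) :
    x = Pi.single i (l : ℤ) := by
  obtain ⟨hnonneg, hsum⟩ := memB_iff.1 hx
  rw [← add_sum_erase _ _ (mem_univ i)] at hsum
  have hrest : ∀ a ∈ univ.erase i, x a = 0 :=
    (sum_eq_zero_iff_of_nonneg fun a _ => hnonneg a).1 (le_antisymm (by linarith)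
      (sum_nonneg fun a _ => hnonneg a))
  funext a
  rcases eq_or_ne a i with rfl | ha
  · rw [sum_eq_zero hrest] at hsum
    rw [Pi.single_eq_same]
    linarith
  · rw [Pi.single_eq_of_ne ha, hrest a (mem_erase.2 ⟨ha, mem_univ a⟩)]

lemma eq_single_of_climb (c : ℕ → V n) (i : ZMod n) {N : ℕ} (hN : l ≤ N)
    (hc : ∀ M ≤ N, memB l (c M))
    (hclimb : ∀ M, N - l ≤ M → M < N → min (c M i + 1) l ≤ c (M + 1) i) :
    c N = Pi.single i (l : ℤ) := by
  have hgrow : ∀ k ≤ l, (k : ℤ) ≤ c (N - l + k) i := by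
    intro k hk
    induction k with
    | zero => exact (hc _ (by omega)).1 i
    | succ k ih =>
      have := hclimb (N - l + k) (by omega) (by omega)
      have := ih (by omega)
      rw [← add_assoc]
      push_cast
      omega
  exact memB_eq_single (hc N le_rfl) (by simpa [Nat.sub_add_cancel hN] using hgrow l le_rfl)

variable {t : ZMod n} (ht : t ≠ 1) {N : ℕ} (hN : l ≤ N) {b : ℕ → V n × V n}
  (hb : ∀ j, 1 ≤ j → j ≤ N → memB 1 (b j).1 ∧ memB 1 (b j).2)
  (hvac : ∀ j, N - l ≤ j → j ≤ N → b j = (Pi.single 1 1, Pi.single t 1))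
include ht hN hb hvac

lemma runR_eq_single {x : V n} (hx : memB l x) : runR b x N = Pi.single 1 (l : ℤ) :=
  eq_single_of_climb (runR b x) 1 hN (memB_runR hx hb) fun M hM hMN => by
    rw [runR, hvac (M + 1) (by omega) hMN]
    exact stepR_vacuum_ge ht (memB_runR hx hb M hMN.le)

lemma runL_eq_single {y : V n} (hy : memB l y) : runL b y N = Pi.single t (l : ℤ) :=
  eq_single_of_climb (runL b y) t hN (memB_runL hy hb) fun M hM hMN => by
    rw [runL, hvac (M + 1) (by omega) hMN]
    exact stepL_vacuum_ge ht (memB_runL hy hb M hMN.le)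

end Convergence

section Kappa

lemma eLet_one : (eLet 1 : V n) = Pi.single 1 1 := by
  funext a
  simp [eLet, Pi.single_apply]

lemma uVec_eq_single (l : ℕ) : (uVec l : V n) = Pi.single 1 (l : ℤ) := by
  funext a
  simp [uVec, Pi.single_apply]

lemma rotL_single (v : ℤ) : rotL (Pi.single 1 v : V n) = Pi.single 0 v := by
  funext i
  simp only [rotL, Pi.single_apply, add_eq_right]

variable (hn : 3 ≤ n)
include hn

lemma sw1n_single (v : ℤ) : sw1n (Pi.single 1 v : V n) = Pi.single 0 v := by
  have h2 : (2 : ZMod n).val = 2 := ZMod.val_ofNat_of_lt (n := n) (a := 2) (by omega)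
  funext i
  simp only [sw1n, Pi.single_apply, add_eq_right, sub_eq_iff_eq_add, one_add_one_eq_two]
  split_ifs <;> subst_vars <;> simp_all

lemma sw12_single (v : ℤ) : sw12 (Pi.single 1 v : V n) = Pi.single 2 v := by
  have h2 : (2 : ZMod n).val = 2 := ZMod.val_ofNat_of_lt (n := n) (a := 2) (by omega)
  funext i
  simp only [sw12, Pi.single_apply, add_eq_right, sub_eq_iff_eq_add, one_add_one_eq_two]
  split_ifs <;> subst_vars <;> simp_all

lemma two_ne_one_zmod : (2 : ZMod n) ≠ 1 := by
  have : Fact (1 < n) := ⟨by omega⟩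
  intro h
  have := congrArg (· - 1) h
  norm_num at this

end Kappa

theorem carriers_converge_general (n : ℕ) (hn : 3 ≤ n) (l : ℕ)
    (κ : V n → V n)
    (hκ : κ = rotL ∨ (Even n ∧ κ = sw1n) ∨ (Even n ∧ κ = sw12)) :
    (∃ N₀ : ℕ, ∀ N, N₀ ≤ N →
      ∀ b : ℕ → V n × V n,
        (∀ j, 1 ≤ j → j ≤ N → memB 1 (b j).1 ∧ memB 1 (b j).2) →
        (∀ j, N - N₀ ≤ j → j ≤ N → b j = vacOf κ) →
        ∀ x : V n, memB l x → runR b x N = uVec l) ∧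
      ∃ N₀ : ℕ, ∀ N, N₀ ≤ N →
        ∀ b : ℕ → V n × V n,
          (∀ j, 1 ≤ j → j ≤ N → memB 1 (b j).1 ∧ memB 1 (b j).2) →
          (∀ j, N - N₀ ≤ j → j ≤ N → b j = vacOf κ) →
          ∀ y : V n, memB l y → runL b y N = κ (uVec l) := by
  have : Fact (1 < n) := ⟨by omega⟩
  obtain ⟨t, ht, hκ_single⟩ :
      ∃ t : ZMod n, t ≠ 1 ∧ ∀ v : ℤ, κ (Pi.single 1 v) = Pi.single t v := by
    rcases hκ with rfl | ⟨-, rfl⟩ | ⟨-, rfl⟩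
    · exact ⟨0, zero_ne_one, rotL_single⟩
    · exact ⟨0, zero_ne_one, sw1n_single hn⟩
    · exact ⟨2, two_ne_one_zmod hn, sw12_single hn⟩
  have hvac : vacOf κ = (Pi.single 1 1, Pi.single t 1) := by
    rw [vacOf, eLet_one, hκ_single]
  refine ⟨⟨l, fun N hN b hb hb_vac x hx => ?_⟩, ⟨l, fun N hN b hb hb_vac y hy => ?_⟩⟩
  · rw [uVec_eq_single]
    exact runR_eq_single ht hN hb (hvac ▸ hb_vac) hx
  · rw [uVec_eq_single, hκ_single]
    exact runL_eq_single ht hN hb (hvac ▸ hb_vac) hy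

/-- Lemma 3.1, convergence of carriers to the vacuum carriers.
Fix `n ≥ 3`, `l ≥ 1` and one of the three admissible `κ`.
(i) There is `N₀` such that for every `N ≥ N₀`, every sequence `b_1, …, b_N ∈ B` with
`b_j = vac` for `N − N₀ ≤ j ≤ N`, and every `x ∈ B_l`, the right-moving carrier through
`b_1, …, b_N` starting from `x` ends at `u_l`.
(ii) There is `N₀` such that for every `N ≥ N₀`, every sequence `c_N, …, c_1 ∈ B` with
`c_j = vac` for `N − N₀ ≤ j ≤ N`, and every `y ∈ B∨_l`, the left-moving carrier through
`c_1, c_2, …, c_N` starting from `y` ends at `u∨_l = κ(u_l)`. -/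
theorem carriers_converge (n : ℕ) (hn : 3 ≤ n) (l : ℕ) (hl : 1 ≤ l)
    (κ : V n → V n)
    (hκ : κ = rotL ∨ (Even n ∧ κ = sw1n) ∨ (Even n ∧ κ = sw12)) :
    (∃ N₀ : ℕ, ∀ N, N₀ ≤ N →
      ∀ b : ℕ → V n × V n,
        (∀ j, 1 ≤ j → j ≤ N → memB 1 (b j).1 ∧ memB 1 (b j).2) →
        (∀ j, N - N₀ ≤ j → j ≤ N → b j = vacOf κ) →
        ∀ x : V n, memB l x → runR b x N = uVec l) ∧
      ∃ N₀ : ℕ, ∀ N, N₀ ≤ N →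
        ∀ b : ℕ → V n × V n,
          (∀ j, 1 ≤ j → j ≤ N → memB 1 (b j).1 ∧ memB 1 (b j).2) →
          (∀ j, N - N₀ ≤ j → j ≤ N → b j = vacOf κ) →
          ∀ y : V n, memB l y → runL b y N = κ (uVec l) :=
  carriers_converge_general n hn l κ hκ

end BBS
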